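/- arXiv:1803.11263 — 7 statements merged into one kernel-verified Lean document; each statement's English description precedes it below -/
import Mathlib

section
/- Let k be a field containing a primitive third root of unity r (so r² + r + 1 = 0 and 3 ≠ 0 in k). In any k-algebra with elements a, x satisfying a³ = 1, the identity a·F = r²·F·a holds, where F := xa + (r+1)ax + ((r+2)/3)(a - a²). -/
/-!
Conjugation by `a` (with `a⁻¹ = a²`) permutes the three terms of `x + a x a² + a² x a`, so
multiplying the relation `x + a x a² + a² x a = a - 1` by `a` on both sides gives
`a x a + a² x + x a² = 1 - a²`. Using `r² = -(r + 1)` and `((r + 2) / 3) (1 - r²) = r + 1`,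
the difference `a F - r² F a` is `r + 1` times the left side of this relation minus its
right side, hence zero.
-/

theorem mul_add_conj_add_conj_mul {A : Type*} [Ring A] {a : A} (ha3 : a ^ 3 = 1) (x : A) :
    a * (x + a * x * a ^ 2 + a ^ 2 * x * a - a + 1) * a
      = a * x * a + a ^ 2 * x + x * a ^ 2 + a ^ 2 - 1 := by
  have h : a * (x + a * x * a ^ 2 + a ^ 2 * x * a - a + 1) * a
      = a * x * a + a ^ 2 * x * a ^ 3 + a ^ 3 * x * a ^ 2 + a ^ 2 - a ^ 3 := by
    noncomm_ring
  rw [h, ha3, mul_one, one_mul]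

theorem aF_eq_r_sq_Fa_general
    {k : Type*} [Field k] (r : k) (h3 : (3 : k) ≠ 0)
    (hr : r ^ 2 + r + 1 = 0)
    {A : Type*} [Ring A] [Algebra k A] (a x : A)
    (ha3 : a ^ 3 = 1)
    (hlin : x + a * x * a ^ 2 + a ^ 2 * x * a - a + 1 = 0)
    (F : A)
    (hF : F = x * a + (r + 1) • (a * x) + ((r + 2) / 3) • (a - a ^ 2)) :
    a * F = r ^ 2 • (F * a) := by
  have hc : (r + 2) / 3 * (1 - r ^ 2) = r + 1 := by
    rw [div_mul_eq_mul_div, div_eq_iff h3]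
    linear_combination (-(r + 1)) * hr
  have haF : a * F = a * x * a + (r + 1) • (a ^ 2 * x) + ((r + 2) / 3) • (a ^ 2 - 1) := by
    rw [hF, ← ha3]; noncomm_ring
  have hFa : F * a = x * a ^ 2 + (r + 1) • (a * x * a) + ((r + 2) / 3) • (a ^ 2 - 1) := by
    rw [hF, ← ha3]; noncomm_ring
  have hdiff : a * F - r ^ 2 • (F * a)
      = (r + 1) • (a * (x + a * x * a ^ 2 + a ^ 2 * x * a - a + 1) * a) := by
    rw [mul_add_conj_add_conj_mul ha3, haF, hFa]
    match_scalars
    · linear_combination (-r) * hr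
    · ring
    · linear_combination hc
    · linear_combination -hc
    · linear_combination -hr
  rw [← sub_eq_zero, hdiff, hlin, mul_zero, zero_mul, smul_zero]

theorem aF_eq_r_sq_Fa
    {k : Type*} [Field k] (r : k) (h3 : (3 : k) ≠ 0)
    (hr : r ^ 2 + r + 1 = 0) (hr1 : r ≠ 1)
    {A : Type*} [Ring A] [Algebra k A] (a x : A)
    (ha3 : a ^ 3 = 1)
    (hlin : x + a * x * a ^ 2 + a ^ 2 * x * a - a + 1 = 0)
    (F : A)
    (hF : F = x * a + (r + 1) • (a * x) + ((r + 2) / 3) • (a - a ^ 2)) :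
    a * F = r ^ 2 • (F * a) :=
  aF_eq_r_sq_Fa_general r h3 hr a x ha3 hlin F hF
end

section
/- Let k be a field containing a primitive third root of unity r. In any k-algebra with elements a, x satisfying a³ = 1, x + a x a² + a² x a - a + 1 = 0, and x² + a x² a² + x a x a² + x + a x a² = 0, the Casimir element Ω := EF + (r²K + rK²)/(r - r²)², where E := xa - r·ax + ((1-r)/3)(a - a²), F := xa + (r+1)ax + ((r+2)/3)(a - a²), K := a², equals (xa)² - a²x - a²x² + 1/3. -/
set_option maxHeartbeats 2000000 in
theorem casimir_formula
    {k : Type*} [Field k] (r : k) (h3 : (3 : k) ≠ 0)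
    (hr : r ^ 2 + r + 1 = 0) (hr1 : r ≠ 1)
    {A : Type*} [Ring A] [Algebra k A] (a x : A)
    (ha3 : a ^ 3 = 1)
    (hlin : x + a * x * a ^ 2 + a ^ 2 * x * a - a + 1 = 0)
    (hquad : x ^ 2 + a * x ^ 2 * a ^ 2 + x * a * x * a ^ 2 + x + a * x * a ^ 2 = 0)
    (E F K Ω : A)
    (hE : E = x * a - r • (a * x) + ((1 - r) / 3) • (a - a ^ 2))
    (hF : F = x * a + (r + 1) • (a * x) + ((r + 2) / 3) • (a - a ^ 2))
    (hK : K = a ^ 2)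
    (hΩ : Ω = E * F + (r ^ 2 / (r - r ^ 2) ^ 2) • K + (r / (r - r ^ 2) ^ 2) • K ^ 2) :
    Ω = (x * a) ^ 2 - a ^ 2 * x - a ^ 2 * x ^ 2 + algebraMap k A (1 / 3) := by
  have hR1 : (a ^ 3 - 1 : A) = 0 := by rw [ha3, sub_self]
  have key : E * F + (r ^ 2 / (r - r ^ 2) ^ 2) • K + (r / (r - r ^ 2) ^ 2) • K ^ 2
      - ((x * a) ^ 2 - a ^ 2 * x - a ^ 2 * x ^ 2 + algebraMap k A (1 / 3)) =
      (r / 3) • (a ^ 3 - 1)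
      + ((1 - r) / 3) • ((a ^ 3 - 1) * a)
      + ((1 - r) / 3) • ((a ^ 3 - 1) * x)
      + ((2 * r - 2) / 3) • (x * (a ^ 3 - 1))
      + ((2 * r - 2) / 3) • (a * x * (a ^ 3 - 1) * a)
      - a * x * (a ^ 3 - 1) * (a * x)
      + ((-2 - r) / 3) • (a ^ 2 * x * (a ^ 3 - 1))
      - a ^ 2 * x * (a ^ 3 - 1) * x
      + r • (a * x ^ 2 * (a ^ 3 - 1) * a)
      - r • (x * a ^ 2 * x * (a ^ 3 - 1))
      + ((r - 1) / 3) • (x + a * x * a ^ 2 + a ^ 2 * x * a - a + 1)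
      + ((2 + r) / 3) • ((x + a * x * a ^ 2 + a ^ 2 * x * a - a + 1) * a ^ 2)
      + (x + a * x * a ^ 2 + a ^ 2 * x * a - a + 1) * (a ^ 2 * x)
      + r • (x * (x + a * x * a ^ 2 + a ^ 2 * x * a - a + 1) * a ^ 2)
      - r • ((x ^ 2 + a * x ^ 2 * a ^ 2 + x * a * x * a ^ 2 + x + a * x * a ^ 2) * a ^ 2) := by
    have hden : (r - r ^ 2) ^ 2 = -3 := by linear_combination (r ^ 2 - 3 * r + 3) * hr
    have hc1 : r ^ 2 / (r - r ^ 2) ^ 2 = -(r ^ 2 / 3) := by rw [hden, div_neg]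
    have hc2 : r / (r - r ^ 2) ^ 2 = -(r / 3) := by rw [hden, div_neg]
    rw [hE, hF, hK, hc1, hc2, Algebra.algebraMap_eq_smul_one]
    simp only [mul_add, add_mul, mul_sub, sub_mul, smul_mul_assoc, mul_smul_comm, smul_smul,
      smul_add, smul_sub, smul_neg, neg_mul, mul_neg, neg_neg, pow_succ, pow_zero, one_mul,
      mul_one, mul_assoc, sub_eq_add_neg, neg_add, neg_smul]
    have hr2 : r ^ 2 = -r - 1 := by linear_combination hr
    have hr3 : r ^ 3 = 1 := by linear_combination (r - 1) * hr
    have hr4 : r ^ 4 = r := by linear_combination (r ^ 2 - r) * hr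
    match_scalars <;>
      (try field_simp) <;> (try ring_nf) <;>
      (try simp only [hr4, hr3, hr2]) <;> (try ring_nf) <;>
      (try simp only [hr4, hr3, hr2]) <;>
      (first | rfl | ring1)
  rw [hlin, hquad, hR1] at key
  simp only [smul_zero, mul_zero, zero_mul, add_zero, zero_add, sub_zero, zero_sub, neg_zero,
    smul_eq_zero] at key
  rw [hΩ]
  exact sub_eq_zero.mp key
end

section
/- Let H be a bialgebra over a field k and suppose x, a ∈ H with a group-like (Δ(a)=a⊗a, ε(a)=1) and x a (1,a)-skew primitive (Δ(x)=1⊗x + x⊗a, ε(x)=0). Then for any q ∈ k, the subalgebra generated by x + qa is a right coideal: Δ maps it into (subalgebra) ⊗ H. -/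
/-!
Writing `y = x + q • a`, one has `Δ y = 1 ⊗ x + y ⊗ a`, which lies in `k[y] ⊗ H` because
`1, y ∈ k[y]`. As `Δ` is an algebra map and the image of `k[y] ⊗ H` in `H ⊗ H` is a subalgebra,
the elements `z` with `Δ z ∈ k[y] ⊗ H` form a subalgebra; it contains `y`, hence all of `k[y]`.
-/

open TensorProduct

section

variable {R A : Type*} [CommSemiring R] [Semiring A] [Bialgebra R A]

def Submodule.IsRightCoideal (V : Submodule R A) : Prop :=
  ∀ z ∈ V, Coalgebra.comul (R := R) z ∈ LinearMap.range (TensorProduct.map V.subtype LinearMap.id)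

theorem Subalgebra.range_map_subtype_id_eq (S : Subalgebra R A) :
    LinearMap.range (TensorProduct.map S.toSubmodule.subtype (LinearMap.id : A →ₗ[R] A)) =
      Subalgebra.toSubmodule (Algebra.TensorProduct.map S.val (AlgHom.id R A)).range := by
  ext w
  simp only [LinearMap.mem_range, Subalgebra.mem_toSubmodule, AlgHom.mem_range]
  rfl

theorem Algebra.isRightCoideal_adjoin {s : Set A}
    (hs : ∀ y ∈ s, Coalgebra.comul (R := R) y ∈ LinearMap.range
      (_root_.TensorProduct.map (Algebra.adjoin R s).toSubmodule.subtype LinearMap.id)) :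
    Submodule.IsRightCoideal (Algebra.adjoin R s).toSubmodule := by
  intro z hz
  rw [Subalgebra.range_map_subtype_id_eq] at hs ⊢
  exact (Algebra.adjoin_le (S := Subalgebra.comap (Bialgebra.comulAlgHom R A) _) hs) hz

theorem Coalgebra.comul_add_smul_of_skewPrimitive {a x : A}
    (ha : Coalgebra.comul (R := R) a = a ⊗ₜ a)
    (hx : Coalgebra.comul (R := R) x = 1 ⊗ₜ x + x ⊗ₜ a) (q : R) :
    Coalgebra.comul (R := R) (x + q • a) = 1 ⊗ₜ x + (x + q • a) ⊗ₜ a := by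
  rw [map_add, map_smul, hx, ha, add_tmul, smul_tmul', add_assoc]

end

theorem adjoin_skew_primitive_is_right_coideal_general
    {k H : Type*} [Field k] [Ring H] [Bialgebra k H]
    (a x : H)
    (ha : Coalgebra.comul (R := k) a = a ⊗ₜ[k] a)
    (hx : Coalgebra.comul (R := k) x = 1 ⊗ₜ[k] x + x ⊗ₜ[k] a)
    (q : k) :
    ∀ z ∈ Algebra.adjoin k {x + q • a},
      Coalgebra.comul (R := k) z ∈
        LinearMap.range (TensorProduct.map
          (Algebra.adjoin k {x + q • a}).toSubmodule.subtype
          (LinearMap.id : H →ₗ[k] H)) := by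
  refine Algebra.isRightCoideal_adjoin ?_
  rintro _ rfl
  rw [Coalgebra.comul_add_smul_of_skewPrimitive ha hx]
  exact ⟨⟨1, Subalgebra.one_mem _⟩ ⊗ₜ x + ⟨x + q • a, Algebra.subset_adjoin rfl⟩ ⊗ₜ a, by simp⟩

theorem adjoin_skew_primitive_is_right_coideal
    {k H : Type*} [Field k] [Ring H] [Bialgebra k H]
    (a x : H)
    (ha : Coalgebra.comul (R := k) a = a ⊗ₜ[k] a)
    (haε : Coalgebra.counit (R := k) a = (1 : k))
    (hx : Coalgebra.comul (R := k) x = 1 ⊗ₜ[k] x + x ⊗ₜ[k] a)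
    (hxε : Coalgebra.counit (R := k) x = (0 : k))
    (q : k) :
    ∀ z ∈ Algebra.adjoin k {x + q • a},
      Coalgebra.comul (R := k) z ∈
        LinearMap.range (TensorProduct.map
          (Algebra.adjoin k {x + q • a}).toSubmodule.subtype
          (LinearMap.id : H →ₗ[k] H)) :=
  adjoin_skew_primitive_is_right_coideal_general a x ha hx q
end

section
/- Let k be a field with a primitive third root of unity r, and V a 2-dimensional k-vector space with basis u, v. Define c: V⊗V → V⊗V by c(u⊗u) = v⊗u, c(v⊗u) = v⊗v, c(u⊗v) = -u⊗u - v⊗u, c(v⊗v) = -u⊗v - v⊗v. Then c satisfies the braid equation (c⊗id)(id⊗c)(c⊗id) = (id⊗c)(c⊗id)(id⊗c) on V⊗V⊗V. -/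
/-!
Writing `g` for the endomorphism of `V` with `g u = v` and `g v = -u - v`, the map is
`c (x ⊗ y) = g y ⊗ x`. Every braiding of the form `x ⊗ y ↦ f y ⊗ h x` with `f`, `h` commuting
satisfies the braid equation: both sides send `x ⊗ y ⊗ z` to `f² z ⊗ f h y ⊗ h² x`.
-/

open TensorProduct

section BraidEquation

variable {R M : Type*} [CommSemiring R] [AddCommMonoid M] [Module R M]

def SatisfiesBraidEquation (c : M ⊗[R] M →ₗ[R] M ⊗[R] M) : Prop :=
  map c LinearMap.id ∘ₗ (TensorProduct.assoc R M M M).symm.toLinearMap ∘ₗ map LinearMap.id c ∘ₗ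
      (TensorProduct.assoc R M M M).toLinearMap ∘ₗ map c LinearMap.id =
    (TensorProduct.assoc R M M M).symm.toLinearMap ∘ₗ map LinearMap.id c ∘ₗ
      (TensorProduct.assoc R M M M).toLinearMap ∘ₗ map c LinearMap.id ∘ₗ
      (TensorProduct.assoc R M M M).symm.toLinearMap ∘ₗ map LinearMap.id c ∘ₗ
      (TensorProduct.assoc R M M M).toLinearMap

theorem satisfiesBraidEquation_map_comp_comm {f h : Module.End R M} (hfh : Commute f h) :
    SatisfiesBraidEquation (map f h ∘ₗ (TensorProduct.comm R M M).toLinearMap) := by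
  unfold SatisfiesBraidEquation
  refine TensorProduct.ext_threefold fun x y z => ?_
  simp only [LinearMap.comp_apply, LinearEquiv.coe_coe, map_tmul, TensorProduct.comm_tmul,
    TensorProduct.assoc_tmul, TensorProduct.assoc_symm_tmul, LinearMap.id_apply]
  rw [← Module.End.mul_apply f h, hfh.eq, Module.End.mul_apply]

end BraidEquation

theorem nichols_braiding_satisfies_braid_equation_general
    {k V : Type*} [Field k]
    [AddCommGroup V] [Module k V] (B : Module.Basis (Fin 2) k V)
    (c : V ⊗[k] V →ₗ[k] V ⊗[k] V)
    (huu : c (B 0 ⊗ₜ[k] B 0) = B 1 ⊗ₜ[k] B 0)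
    (hvu : c (B 1 ⊗ₜ[k] B 0) = B 1 ⊗ₜ[k] B 1)
    (huv : c (B 0 ⊗ₜ[k] B 1) = -(B 0 ⊗ₜ[k] B 0) - B 1 ⊗ₜ[k] B 0)
    (hvv : c (B 1 ⊗ₜ[k] B 1) = -(B 0 ⊗ₜ[k] B 1) - B 1 ⊗ₜ[k] B 1) :
    ∀ w : (V ⊗[k] V) ⊗[k] V,
      (TensorProduct.map c LinearMap.id)
        ((TensorProduct.assoc k V V V).symm
          ((TensorProduct.map LinearMap.id c)
            ((TensorProduct.assoc k V V V)
              ((TensorProduct.map c LinearMap.id) w))))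
      = (TensorProduct.assoc k V V V).symm
          ((TensorProduct.map LinearMap.id c)
            ((TensorProduct.assoc k V V V)
              ((TensorProduct.map c LinearMap.id)
                ((TensorProduct.assoc k V V V).symm
                  ((TensorProduct.map LinearMap.id c)
                    ((TensorProduct.assoc k V V V) w)))))) := by
  set g : Module.End k V := B.constr k ![B 1, -B 0 - B 1]
  have hc : c = map g 1 ∘ₗ (TensorProduct.comm k V V).toLinearMap := by
    refine (B.tensorProduct B).ext fun ⟨i, j⟩ => ?_
    fin_cases i <;> fin_cases j <;>
      simp [g, huu, hvu, huv, hvv, sub_tmul, neg_tmul]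
  have hbraid := satisfiesBraidEquation_map_comp_comm (Commute.one_right g)
  rw [← hc] at hbraid
  exact LinearMap.congr_fun hbraid

theorem nichols_braiding_satisfies_braid_equation
    {k V : Type*} [Field k] (r : k) (h3 : (3 : k) ≠ 0)
    (hr : r ^ 2 + r + 1 = 0) (hr1 : r ≠ 1)
    [AddCommGroup V] [Module k V] (B : Module.Basis (Fin 2) k V)
    (c : V ⊗[k] V →ₗ[k] V ⊗[k] V)
    (huu : c (B 0 ⊗ₜ[k] B 0) = B 1 ⊗ₜ[k] B 0)
    (hvu : c (B 1 ⊗ₜ[k] B 0) = B 1 ⊗ₜ[k] B 1)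
    (huv : c (B 0 ⊗ₜ[k] B 1) = -(B 0 ⊗ₜ[k] B 0) - B 1 ⊗ₜ[k] B 0)
    (hvv : c (B 1 ⊗ₜ[k] B 1) = -(B 0 ⊗ₜ[k] B 1) - B 1 ⊗ₜ[k] B 1) :
    ∀ w : (V ⊗[k] V) ⊗[k] V,
      (TensorProduct.map c LinearMap.id)
        ((TensorProduct.assoc k V V V).symm
          ((TensorProduct.map LinearMap.id c)
            ((TensorProduct.assoc k V V V)
              ((TensorProduct.map c LinearMap.id) w))))
      = (TensorProduct.assoc k V V V).symm
          ((TensorProduct.map LinearMap.id c)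
            ((TensorProduct.assoc k V V V)
              ((TensorProduct.map c LinearMap.id)
                ((TensorProduct.assoc k V V V).symm
                  ((TensorProduct.map LinearMap.id c)
                    ((TensorProduct.assoc k V V V) w)))))) :=
  nichols_braiding_satisfies_braid_equation_general B c huu hvu huv hvv
end

section
/- Let k be a field with char(k) ≠ 2, 3 and let B be the quotient of the free k-algebra on generators u, v by the relations u³ = 0, v³ = 0, u²v + uvu + vu² = 0, u² + uv + v² = 0. Then B is at most 9-dimensional over k, spanned by 1, u, v, u², vu, v², vuv, v²u, v²uv (note v²uv = vuv² modulo the relations). -/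
/-- The defining relations of the Nichols algebra `B(V_a)`. -/
inductive nicholsRel (k : Type*) [Field k] :
    FreeAlgebra k (Fin 2) → FreeAlgebra k (Fin 2) → Prop
  | u3 : nicholsRel k ((FreeAlgebra.ι k (0 : Fin 2)) ^ 3) 0
  | v3 : nicholsRel k ((FreeAlgebra.ι k (1 : Fin 2)) ^ 3) 0
  | cubic : nicholsRel k
      ((FreeAlgebra.ι k (0 : Fin 2)) ^ 2 * FreeAlgebra.ι k (1 : Fin 2)
        + FreeAlgebra.ι k (0 : Fin 2) * FreeAlgebra.ι k (1 : Fin 2)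
            * FreeAlgebra.ι k (0 : Fin 2)
        + FreeAlgebra.ι k (1 : Fin 2) * (FreeAlgebra.ι k (0 : Fin 2)) ^ 2) 0
  | quad : nicholsRel k
      ((FreeAlgebra.ι k (0 : Fin 2)) ^ 2
        + FreeAlgebra.ι k (0 : Fin 2) * FreeAlgebra.ι k (1 : Fin 2)
        + (FreeAlgebra.ι k (1 : Fin 2)) ^ 2) 0

theorem nichols_algebra_spanned_by_nine
    {k : Type*} [Field k] (h2 : (2 : k) ≠ 0) (h3 : (3 : k) ≠ 0) :
    letI mk := RingQuot.mkAlgHom k (nicholsRel k)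
    letI u := mk (FreeAlgebra.ι k (0 : Fin 2))
    letI v := mk (FreeAlgebra.ι k (1 : Fin 2))
    Submodule.span k
      ({1, u, v, u ^ 2, v * u, v ^ 2, v * u * v, v ^ 2 * u, v ^ 2 * u * v} :
        Set (RingQuot (nicholsRel k))) = ⊤ := by
  set mk := RingQuot.mkAlgHom k (nicholsRel k) with hmk
  set u := mk (FreeAlgebra.ι k (0 : Fin 2)) with hu
  set v := mk (FreeAlgebra.ι k (1 : Fin 2)) with hv
  set S : Submodule k (RingQuot (nicholsRel k)) :=
    Submodule.span k ({1, u, v, u ^ 2, v * u, v ^ 2, v * u * v, v ^ 2 * u, v ^ 2 * u * v} :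
      Set (RingQuot (nicholsRel k))) with hSdef
  -- the relations in the quotient
  have hu3 : u ^ 3 = 0 := by
    show mk (FreeAlgebra.ι k (0 : Fin 2)) ^ 3 = 0
    rw [← map_pow, RingQuot.mkAlgHom_rel k nicholsRel.u3, map_zero]
  have hv3 : v ^ 3 = 0 := by
    show mk (FreeAlgebra.ι k (1 : Fin 2)) ^ 3 = 0
    rw [← map_pow, RingQuot.mkAlgHom_rel k nicholsRel.v3, map_zero]
  have hcubic : u ^ 2 * v + u * v * u + v * u ^ 2 = 0 := by
    have := RingQuot.mkAlgHom_rel k (nicholsRel.cubic (k := k))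
    simpa [map_add, map_mul, map_pow] using this
  have hquad : u ^ 2 + u * v + v ^ 2 = 0 := by
    have := RingQuot.mkAlgHom_rel k (nicholsRel.quad (k := k))
    simpa [map_add, map_mul, map_pow] using this
  -- derived identities
  have hA : u * v = -u ^ 2 - v ^ 2 := by
    linear_combination (norm := noncomm_ring) hquad
  have hB : u * u ^ 2 = 0 := by
    linear_combination (norm := noncomm_ring) hu3
  have hC' : u * (v * u) + v ^ 2 * u = 0 := by
    linear_combination (norm := noncomm_ring) hquad * u - hu3
  have hC : u * (v * u) = -(v ^ 2 * u) := by
    linear_combination (norm := noncomm_ring) hC'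
  have hD' : v * u ^ 2 + v * u * v = 0 := by
    linear_combination (norm := noncomm_ring) v * hquad - hv3
  have hD : v * u ^ 2 = -(v * u * v) := by
    linear_combination (norm := noncomm_ring) hD'
  have hE' : u * v ^ 2 + v ^ 2 * u + v * u * v = 0 := by
    linear_combination (norm := noncomm_ring)
      hquad * v - hcubic + hquad * u + v * hquad - hu3 - 2 * hv3
  have hE : u * v ^ 2 = -(v ^ 2 * u) - v * u * v := by
    linear_combination (norm := noncomm_ring) hE'
  have hF : u * (v * u * v) = -(v ^ 2 * u * v) := by
    linear_combination (norm := noncomm_ring) hquad * u * v - hu3 * v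
  have hG : u * (v ^ 2 * u) = v ^ 2 * u * v := by
    linear_combination (norm := noncomm_ring) hE' * u - v * hD' - v * hC' + hv3 * u
  have hH : u * (v ^ 2 * u * v) = 0 := by
    linear_combination (norm := noncomm_ring)
      hG * v + v ^ 2 * hE' - v * hv3 * u - hv3 * (u * v)
  have hI : v * (v ^ 2) = 0 := by
    linear_combination (norm := noncomm_ring) hv3
  have hJ : v * (v ^ 2 * u) = 0 := by
    linear_combination (norm := noncomm_ring) hv3 * u
  have hK : v * (v ^ 2 * u * v) = 0 := by
    linear_combination (norm := noncomm_ring) hv3 * (u * v)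
  -- memberships of the nine spanning elements
  have m1 : (1 : RingQuot (nicholsRel k)) ∈ S := Submodule.subset_span (Set.mem_insert _ _)
  have mu : u ∈ S := Submodule.subset_span
    (Set.mem_insert_of_mem _ (Set.mem_insert _ _))
  have mv : v ∈ S := Submodule.subset_span
    (Set.mem_insert_of_mem _ (Set.mem_insert_of_mem _ (Set.mem_insert _ _)))
  have mu2 : u ^ 2 ∈ S := Submodule.subset_span
    (Set.mem_insert_of_mem _ (Set.mem_insert_of_mem _ (Set.mem_insert_of_mem _
      (Set.mem_insert _ _))))
  have mvu : v * u ∈ S := Submodule.subset_span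
    (Set.mem_insert_of_mem _ (Set.mem_insert_of_mem _ (Set.mem_insert_of_mem _
      (Set.mem_insert_of_mem _ (Set.mem_insert _ _)))))
  have mv2 : v ^ 2 ∈ S := Submodule.subset_span
    (Set.mem_insert_of_mem _ (Set.mem_insert_of_mem _ (Set.mem_insert_of_mem _
      (Set.mem_insert_of_mem _ (Set.mem_insert_of_mem _ (Set.mem_insert _ _))))))
  have mvuv : v * u * v ∈ S := Submodule.subset_span
    (Set.mem_insert_of_mem _ (Set.mem_insert_of_mem _ (Set.mem_insert_of_mem _
      (Set.mem_insert_of_mem _ (Set.mem_insert_of_mem _ (Set.mem_insert_of_mem _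
        (Set.mem_insert _ _)))))))
  have mv2u : v ^ 2 * u ∈ S := Submodule.subset_span
    (Set.mem_insert_of_mem _ (Set.mem_insert_of_mem _ (Set.mem_insert_of_mem _
      (Set.mem_insert_of_mem _ (Set.mem_insert_of_mem _ (Set.mem_insert_of_mem _
        (Set.mem_insert_of_mem _ (Set.mem_insert _ _))))))))
  have mv2uv : v ^ 2 * u * v ∈ S := Submodule.subset_span
    (Set.mem_insert_of_mem _ (Set.mem_insert_of_mem _ (Set.mem_insert_of_mem _
      (Set.mem_insert_of_mem _ (Set.mem_insert_of_mem _ (Set.mem_insert_of_mem _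
        (Set.mem_insert_of_mem _ (Set.mem_insert_of_mem _ rfl))))))))
  -- closure under left multiplication by u
  have hSu : ∀ z ∈ S, u * z ∈ S := by
    intro z hz
    refine Submodule.span_induction ?_ ?_ ?_ ?_ hz
    · intro x hx
      simp only [Set.mem_insert_iff, Set.mem_singleton_iff] at hx
      rcases hx with rfl | rfl | rfl | rfl | rfl | rfl | rfl | rfl | rfl
      · rw [mul_one]; exact mu
      · rw [show u * u = u ^ 2 from (sq u).symm]; exact mu2
      · rw [hA]; exact sub_mem (neg_mem mu2) mv2
      · rw [hB]; exact zero_mem S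
      · rw [hC]; exact neg_mem mv2u
      · rw [hE]; exact sub_mem (neg_mem mv2u) mvuv
      · rw [hF]; exact neg_mem mv2uv
      · rw [hG]; exact mv2uv
      · rw [hH]; exact zero_mem S
    · rw [mul_zero]; exact zero_mem S
    · intro x y _ _ hx hy; rw [mul_add]; exact add_mem hx hy
    · intro a x _ hx; rw [mul_smul_comm]; exact S.smul_mem a hx
  -- closure under left multiplication by v
  have hSv : ∀ z ∈ S, v * z ∈ S := by
    intro z hz
    refine Submodule.span_induction ?_ ?_ ?_ ?_ hz
    · intro x hx
      simp only [Set.mem_insert_iff, Set.mem_singleton_iff] at hx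
      rcases hx with rfl | rfl | rfl | rfl | rfl | rfl | rfl | rfl | rfl
      · rw [mul_one]; exact mv
      · exact mvu
      · rw [show v * v = v ^ 2 from (sq v).symm]; exact mv2
      · rw [hD]; exact neg_mem mvuv
      · rw [show v * (v * u) = v ^ 2 * u from by noncomm_ring]; exact mv2u
      · rw [hI]; exact zero_mem S
      · rw [show v * (v * u * v) = v ^ 2 * u * v from by noncomm_ring]; exact mv2uv
      · rw [hJ]; exact zero_mem S
      · rw [hK]; exact zero_mem S
    · rw [mul_zero]; exact zero_mem S
    · intro x y _ _ hx hy; rw [mul_add]; exact add_mem hx hy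
    · intro a x _ hx; rw [mul_smul_comm]; exact S.smul_mem a hx
  -- main induction
  have key : ∀ y : FreeAlgebra k (Fin 2), ∀ z ∈ S, mk y * z ∈ S := by
    intro y
    induction y using FreeAlgebra.induction with
    | grade0 r =>
        intro z hz
        rw [AlgHom.commutes, ← Algebra.smul_def]
        exact S.smul_mem r hz
    | grade1 i =>
        intro z hz
        fin_cases i
        · exact hSu z hz
        · exact hSv z hz
    | mul a b ha hb =>
        intro z hz
        rw [map_mul, mul_assoc]
        exact ha _ (hb z hz)
    | add a b ha hb =>
        intro z hz
        rw [map_add, add_mul]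
        exact add_mem (ha z hz) (hb z hz)
  rw [eq_top_iff]
  rintro x -
  obtain ⟨y, rfl⟩ := RingQuot.mkAlgHom_surjective k (nicholsRel k) x
  have := key y 1 m1
  rwa [mul_one] at this
end

section
/- Let k be a field with a primitive third root of unity r, and let A be a k-algebra with elements a, b, x, y, F satisfying: ba = ab, ya = ay, bx = xb, yx = xy, by = -yb, a³ = 1, b² = 1, x + axa² + a²xa - a + 1 = 0, where F := xa + (r+1)ax + ((r+2)/3)(a - a²). Then bF = Fb and (y + pb)F = F(y + pb) for any p ∈ k. -/
theorem F_commutes_with_b_and_y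
    {k : Type*} [Field k] (r : k) (h3 : (3 : k) ≠ 0)
    (hr : r ^ 2 + r + 1 = 0) (hr1 : r ≠ 1) (p : k)
    {A : Type*} [Ring A] [Algebra k A] (a b x y : A)
    (hba : b * a = a * b) (hya : y * a = a * y) (hbx : b * x = x * b)
    (hyx : y * x = x * y) (hby : b * y = -(y * b))
    (ha3 : a ^ 3 = 1) (hb2 : b ^ 2 = 1)
    (hlin : x + a * x * a ^ 2 + a ^ 2 * x * a - a + 1 = 0)
    (F : A)
    (hF : F = x * a + (r + 1) • (a * x) + ((r + 2) / 3) • (a - a ^ 2)) :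
    b * F = F * b ∧ (y + p • b) * F = F * (y + p • b) := by
  have hbF : Commute b F := by
    have cba : Commute b a := hba
    have cbx : Commute b x := hbx
    rw [hF]
    exact ((cbx.mul_right cba).add_right
      ((cba.mul_right cbx).smul_right _)).add_right
      ((cba.sub_right (cba.pow_right 2)).smul_right _)
  have hyF : Commute y F := by
    have cya : Commute y a := hya
    have cyx : Commute y x := hyx
    rw [hF]
    exact ((cyx.mul_right cya).add_right
      ((cya.mul_right cyx).smul_right _)).add_right
      ((cya.sub_right (cya.pow_right 2)).smul_right _)
  exact ⟨hbF, (hyF.add_left (hbF.smul_left p))⟩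
end

section
/- Let k be a field with a primitive third root of unity r and q ∈ k. Let A be a k-algebra with elements a, x satisfying a³ = 1 and x + axa² + a²xa - a + 1 = 0 and x² + ax²a² + xaxa² + x + axa² = 0. With F := xa + (r+1)ax + ((r+2)/3)(a - a²), the commutation relation (x+qa)F = rF(x+qa) + ((3q+1)/3)(r+2)·aF + ((r-1)/3)·F + (1/3)(a - 1) holds. -/
theorem xqa_F_commutation
    {k : Type*} [Field k] (r : k) (h3 : (3 : k) ≠ 0)
    (hr : r ^ 2 + r + 1 = 0) (hr1 : r ≠ 1) (q : k)
    {A : Type*} [Ring A] [Algebra k A] (a x : A)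
    (ha3 : a ^ 3 = 1)
    (hlin : x + a * x * a ^ 2 + a ^ 2 * x * a - a + 1 = 0)
    (hquad : x ^ 2 + a * x ^ 2 * a ^ 2 + x * a * x * a ^ 2 + x + a * x * a ^ 2 = 0)
    (F : A)
    (hF : F = x * a + (r + 1) • (a * x) + ((r + 2) / 3) • (a - a ^ 2)) :
    (x + q • a) * F
      = r • (F * (x + q • a)) + ((3 * q + 1) / 3 * (r + 2)) • (a * F)
        + ((r - 1) / 3) • F + (1 / 3 : k) • (a - 1) := by
  set s := a * x * a ^ 2 with hs
  -- basic consequences of a^3 = 1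
  have haa : a * (a * a) = 1 := by
    rw [show a * (a * a) = a ^ 3 by noncomm_ring, ha3]
  have hA1 : ∀ y : A, a * (a * (a * y)) = y := by
    intro y
    rw [show a * (a * (a * y)) = (a * (a * a)) * y by noncomm_ring, haa, one_mul]
  have hsa : s * a = a * x := by
    rw [hs, show a * x * a ^ 2 * a = a * x * a ^ 3 by noncomm_ring, ha3, mul_one]
  have hta : a ^ 2 * x * a * a = a * s := by
    rw [hs]; noncomm_ring
  have hSA : ∀ y : A, s * (a * y) = a * (x * y) := by
    intro y
    linear_combination (norm := noncomm_ring) hsa * y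
  have hxa : x * a = a * a - a - a * x - a * s := by
    linear_combination (norm := noncomm_ring) hlin * a - hsa - hta
  have hXA : ∀ y : A, x * (a * y) = a * (a * y) - a * y - a * (x * y) - a * (s * y) := by
    intro y
    linear_combination (norm := noncomm_ring) hxa * y
  have hss1 : s * s = a * x ^ 2 * a ^ 2 := by
    rw [hs, show a * x * a ^ 2 * (a * x * a ^ 2) = a * x * a ^ 3 * x * a ^ 2 by noncomm_ring,
      ha3, mul_one]
    noncomm_ring
  have hxs1 : x * s = x * a * x * a ^ 2 := by
    rw [hs]; noncomm_ring
  have hss : s * s = -(x * x) - x * s - x - s := by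
    linear_combination (norm := noncomm_ring) hquad + hss1 + hxs1
  have hSS : ∀ y : A, s * (s * y) = -(x * (x * y)) - x * (s * y) - x * y - s * y := by
    intro y
    linear_combination (norm := noncomm_ring) hss * y
  obtain ⟨t, h3t⟩ : ∃ t : k, 3 * t = 1 := ⟨3⁻¹, mul_inv_cancel₀ h3⟩
  have hdiv : ∀ c : k, c / 3 = c * t := by
    intro c
    rw [div_eq_iff h3]
    linear_combination -c * h3t
  rw [hF]
  simp only [hdiv, one_mul, mul_one]
  simp only [pow_succ, pow_zero, pow_one, one_mul, mul_one, mul_add, add_mul, mul_sub, sub_mul,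
    smul_add, smul_sub, smul_smul, smul_mul_assoc, mul_smul_comm, neg_mul, mul_neg, smul_neg,
    neg_neg, mul_assoc, haa, hA1, hsa, hSA, hxa, hXA, hss, hSS]
  match_scalars
  · linear_combination (t^2 + -1*q + q*t + 3*q*t^2) * hr + (t + -2*q + 3*q*t + r*t + 3*r*q*t) * h3t
  · linear_combination (q + -1*q*t + -3*q*t^2) * hr + (1 + -2*t + 2*q + -3*q*t + -1*r*t + -3*r*q*t) * h3t
  · linear_combination (q + -3*q*t) * hr + (q + -1*r*q) * h3t
  · linear_combination (q) * hr + (2*q + r*q) * h3t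
  · linear_combination (-1*t^2) * hr + (-1 + t) * h3t
  · linear_combination (-2*t) * hr
  · linear_combination (-1) * h3t
  · linear_combination (-1) * hr
  · ring
  · ring
end
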